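/- arXiv:1505.07234 — 4 statements merged into one kernel-verified Lean document; each statement's English description precedes it below -/
import Mathlib

section
/- Let r_1 = (2α_1/π)^{1/4} and for t > 0 define f(t) = (π/24) r_1^6 (6t + 3/t − t^3) + α_2 r_1^2 t for t < 1 and f(t) = (π/3) r_1^6 + α_2 r_1^2 t for t ≥ 1. Then f is C^1 on (0,∞), strictly convex on (0,1), tends to +∞ as t → 0+, is strictly increasing on [1,∞), and admits a unique minimizer t_0 ∈ (0,1) given by t_0 = √(1 + α_2/α_1) − √(α_2/α_1). -/
open Real Set Filter Topology

/-! With `a = π r₁⁶ / 24` and `b = α₂ r₁²`, the energy is `a (6t + 3/t - t³) + b t` on `(0, 1]`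
and `8a + b t` on `[1, ∞)`. Both branches have slope `b` at `t = 1`, so `f` is `C¹` with
derivative `b - 3a · (max (t⁻¹ - t) 0)²`. As `t ↦ t⁻¹ - t` decreases strictly and is positive on
`(0, 1)`, this derivative increases strictly there (convexity) and changes sign exactly where
`t⁻¹ - t = √(b / 3a) = 2 √(α₂/α₁)`; since `(√(1 + c) - √c)⁻¹ = √(1 + c) + √c`, the root is
`t₀ = √(1 + α₂/α₁) - √(α₂/α₁)`. -/

theorem contDiffOn_one_of_hasDerivAt {f f' : ℝ → ℝ} {s : Set ℝ} (hs : IsOpen s)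
    (hf : ∀ x ∈ s, HasDerivAt f (f' x) x) (hf' : ContinuousOn f' s) : ContDiffOn ℝ 1 f s := by
  rw [contDiffOn_one_iff_derivWithin hs.uniqueDiffOn]
  refine ⟨fun x hx => (hf x hx).differentiableAt.differentiableWithinAt, hf'.congr fun x hx => ?_⟩
  rw [derivWithin_of_isOpen hs hx, (hf x hx).deriv]

theorem lt_of_hasDerivAt_neg_of_pos {f f' : ℝ → ℝ} {a x₀ x : ℝ} (hx₀ : a < x₀)
    (hf : ∀ y ∈ Ioi a, HasDerivAt f (f' y) y) (hneg : ∀ y ∈ Ioo a x₀, f' y < 0)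
    (hpos : ∀ y ∈ Ioi x₀, 0 < f' y) (hx : a < x) (hne : x ≠ x₀) : f x₀ < f x := by
  have hcont : ContinuousOn f (Ioi a) := fun y hy => (hf y hy).continuousAt.continuousWithinAt
  rcases hne.lt_or_gt with h | h
  · refine strictAntiOn_of_deriv_neg (convex_Ioc a x₀) (hcont.mono Ioc_subset_Ioi_self) ?_
      ⟨hx, h.le⟩ ⟨hx₀, le_rfl⟩ h
    intro y hy
    rw [interior_Ioc] at hy
    rw [(hf y hy.1).deriv]
    exact hneg y hy
  · refine strictMonoOn_of_deriv_pos (convex_Ici x₀) (hcont.mono fun y hy => hx₀.trans_le hy) ?_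
      self_mem_Ici h.le h
    intro y hy
    rw [interior_Ici] at hy
    rw [(hf y (hx₀.trans hy)).deriv]
    exact hpos y hy

theorem strictAntiOn_inv_sub_self : StrictAntiOn (fun t : ℝ => t⁻¹ - t) (Ioi 0) :=
  fun _ hx _ _ hxy => sub_lt_sub (inv_strictAntiOn hx (mem_Ioi.2 (hx.trans hxy)) hxy) hxy

theorem inv_sub_self_pos_iff {t : ℝ} (ht : 0 < t) : 0 < t⁻¹ - t ↔ t < 1 := by
  have h : t⁻¹ - t = (1 - t) * (1 + t) / t := by field_simp; ring
  rw [h, div_pos_iff_of_pos_right ht, mul_pos_iff_of_pos_right (by linarith), sub_pos]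

theorem sqrt_one_add_sub_sqrt_pos {c : ℝ} (hc : 0 ≤ c) : 0 < √(1 + c) - √c :=
  sub_pos.2 (sqrt_lt_sqrt hc (lt_one_add c))

theorem inv_sqrt_one_add_sub_sqrt {c : ℝ} (hc : 0 ≤ c) :
    (√(1 + c) - √c)⁻¹ = √(1 + c) + √c := by
  refine inv_eq_of_mul_eq_one_right ?_
  rw [mul_comm, ← sq_sub_sq, sq_sqrt (by linarith), sq_sqrt hc]
  ring

namespace ThomasFermi

noncomputable def energy (a b t : ℝ) : ℝ :=
  if t < 1 then a * (6 * t + 3 / t - t ^ 3) + b * t else 8 * a + b * t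

noncomputable def energyDeriv (a b t : ℝ) : ℝ :=
  b - 3 * a * max (t⁻¹ - t) 0 ^ 2

variable {a b t t₀ : ℝ}

theorem energy_of_le_one (ht : t ≤ 1) : energy a b t = a * (6 * t + 3 / t - t ^ 3) + b * t := by
  rcases ht.lt_or_eq with h | rfl
  · exact if_pos h
  · rw [energy, if_neg (lt_irrefl 1)]
    ring

theorem energy_of_one_le (ht : 1 ≤ t) : energy a b t = 8 * a + b * t :=
  if_neg ht.not_gt

theorem energyDeriv_of_le_one (hpos : 0 < t) (ht : t ≤ 1) :
    energyDeriv a b t = b - 3 * a * (t⁻¹ - t) ^ 2 := by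
  rw [energyDeriv, max_eq_left]
  linarith [one_le_inv_iff₀.2 ⟨hpos, ht⟩]

theorem energyDeriv_of_one_le (ht : 1 ≤ t) : energyDeriv a b t = b := by
  rw [energyDeriv, max_eq_right, zero_pow two_ne_zero, mul_zero, sub_zero]
  linarith [inv_le_one_of_one_le₀ ht]

theorem hasDerivAt_energy_inner (ht : t ≠ 0) :
    HasDerivAt (fun t => a * (6 * t + 3 / t - t ^ 3) + b * t) (b - 3 * a * (t⁻¹ - t) ^ 2) t := by
  simp only [div_eq_mul_inv]
  refine (((((hasDerivAt_id' t).const_mul 6).add ((hasDerivAt_inv ht).const_mul 3)).sub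
    (hasDerivAt_pow 3 t)).const_mul a |>.add ((hasDerivAt_id' t).const_mul b)).congr_deriv ?_
  field_simp
  ring

theorem hasDerivAt_energy_outer :
    HasDerivAt (fun t => 8 * a + b * t) b t := by
  simpa using ((hasDerivAt_id t).const_mul b).const_add (8 * a)

theorem hasDerivAt_energy (ht : 0 < t) : HasDerivAt (energy a b) (energyDeriv a b t) t := by
  rcases lt_trichotomy t 1 with h | rfl | h
  · rw [energyDeriv_of_le_one ht h.le]
    exact (hasDerivAt_energy_inner ht.ne').congr_of_eventuallyEq
      (eventually_of_mem (Iio_mem_nhds h) fun x hx => energy_of_le_one (le_of_lt hx))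
  · have hl : HasDerivWithinAt (energy a b) b (Iic 1) 1 := by
      refine ((hasDerivAt_energy_inner one_ne_zero).hasDerivWithinAt.congr
        (fun x hx => energy_of_le_one hx) (energy_of_le_one le_rfl)).congr_deriv ?_
      norm_num
    have hr : HasDerivWithinAt (energy a b) b (Ici 1) 1 :=
      hasDerivAt_energy_outer.hasDerivWithinAt.congr
        (fun x hx => energy_of_one_le hx) (energy_of_one_le le_rfl)
    have h := hl.union hr
    rw [Iic_union_Ici, hasDerivWithinAt_univ] at h
    rwa [energyDeriv_of_one_le le_rfl]
  · rw [energyDeriv_of_one_le h.le]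
    exact hasDerivAt_energy_outer.congr_of_eventuallyEq
      (eventually_of_mem (Ioi_mem_nhds h) fun x hx => energy_of_one_le (le_of_lt hx))

theorem continuousOn_energyDeriv : ContinuousOn (energyDeriv a b) (Ioi 0) := by
  have hinv : ContinuousOn (fun t : ℝ => t⁻¹) (Ioi 0) :=
    continuousOn_inv₀.mono fun _ ht => ne_of_gt ht
  unfold energyDeriv
  fun_prop

theorem contDiffOn_energy : ContDiffOn ℝ 1 (energy a b) (Ioi 0) :=
  contDiffOn_one_of_hasDerivAt isOpen_Ioi (fun _ ht => hasDerivAt_energy ht)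
    continuousOn_energyDeriv

theorem strictMonoOn_energyDeriv (ha : 0 < a) : StrictMonoOn (energyDeriv a b) (Ioo 0 1) := by
  intro x hx y hy hxy
  have hy₀ : 0 < y⁻¹ - y := (inv_sub_self_pos_iff hy.1).2 hy.2
  have hyx : y⁻¹ - y < x⁻¹ - x := strictAntiOn_inv_sub_self hx.1 hy.1 hxy
  rw [energyDeriv_of_le_one hx.1 hx.2.le, energyDeriv_of_le_one hy.1 hy.2.le]
  have := pow_lt_pow_left₀ hyx hy₀.le two_ne_zero
  nlinarith

theorem strictConvexOn_energy (ha : 0 < a) : StrictConvexOn ℝ (Ioo 0 1) (energy a b) := by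
  have hderiv : ∀ t ∈ Ioo (0 : ℝ) 1, HasDerivAt (energy a b) (energyDeriv a b t) t :=
    fun _ ht => hasDerivAt_energy ht.1
  refine StrictMonoOn.strictConvexOn_of_deriv (convex_Ioo 0 1)
    (fun t ht => (hderiv t ht).continuousAt.continuousWithinAt) ?_
  rw [interior_Ioo]
  exact (strictMonoOn_energyDeriv ha).congr fun t ht => ((hderiv t ht).deriv).symm

theorem tendsto_energy_nhdsGT_zero (ha : 0 < a) : Tendsto (energy a b) (𝓝[>] 0) atTop := by
  have hev : (fun t => 3 * a * t⁻¹ + (a * (6 * t - t ^ 3) + b * t)) =ᶠ[𝓝[>] 0] energy a b :=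
    eventually_of_mem (Ioo_mem_nhdsGT one_pos) fun t ht => by
      rw [energy_of_le_one ht.2.le]
      ring
  have hbounded : Tendsto (fun t => a * (6 * t - t ^ 3) + b * t) (𝓝[>] 0)
      (𝓝 (a * (6 * 0 - 0 ^ 3) + b * 0)) :=
    (Continuous.tendsto (by fun_prop) 0).mono_left nhdsWithin_le_nhds
  exact ((tendsto_inv_nhdsGT_zero.const_mul_atTop (by positivity)).atTop_add hbounded).congr' hev

theorem strictMonoOn_energy (hb : 0 < b) : StrictMonoOn (energy a b) (Ici 1) := by
  intro x hx y hy hxy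
  rw [energy_of_one_le hx, energy_of_one_le hy]
  gcongr

theorem energyDeriv_neg (ha : 0 < a) (ht₀ : 0 < t₀) (hs₀ : 0 < t₀⁻¹ - t₀)
    (hb : 3 * a * (t₀⁻¹ - t₀) ^ 2 = b) (ht : t ∈ Ioo 0 t₀) : energyDeriv a b t < 0 := by
  have hlt : t₀⁻¹ - t₀ < t⁻¹ - t := strictAntiOn_inv_sub_self ht.1 ht₀ ht.2
  have ht₁ : t ≤ 1 := (ht.2.trans ((inv_sub_self_pos_iff ht₀).1 hs₀)).le
  rw [energyDeriv_of_le_one ht.1 ht₁, ← hb]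
  have := pow_lt_pow_left₀ hlt hs₀.le two_ne_zero
  nlinarith

theorem energyDeriv_pos (ha : 0 < a) (ht₀ : 0 < t₀) (hs₀ : 0 < t₀⁻¹ - t₀)
    (hb : 3 * a * (t₀⁻¹ - t₀) ^ 2 = b) (ht : t₀ < t) : 0 < energyDeriv a b t := by
  have hlt : max (t⁻¹ - t) 0 < t₀⁻¹ - t₀ :=
    max_lt (strictAntiOn_inv_sub_self ht₀ (ht₀.trans ht) ht) hs₀
  rw [energyDeriv, ← hb]
  have := pow_lt_pow_left₀ hlt (le_max_right _ _) two_ne_zero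
  nlinarith

theorem energy_lt_energy_of_ne (ha : 0 < a) (ht₀ : 0 < t₀) (hs₀ : 0 < t₀⁻¹ - t₀)
    (hb : 3 * a * (t₀⁻¹ - t₀) ^ 2 = b) (ht : 0 < t) (hne : t ≠ t₀) : energy a b t₀ < energy a b t :=
  lt_of_hasDerivAt_neg_of_pos ht₀ (fun _ hy => hasDerivAt_energy hy)
    (fun _ hy => energyDeriv_neg ha ht₀ hs₀ hb hy)
    (fun _ hy => energyDeriv_pos ha ht₀ hs₀ hb hy) ht hne

end ThomasFermi

open ThomasFermi

/-- The Thomas-Fermi energy as a function of `t = (r/r₁)²`: it is `C¹` on `(0,∞)`,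
strictly convex on `(0,1)`, tends to `+∞` as `t → 0⁺`, strictly increasing on `[1,∞)`,
and has the unique minimizer `t₀ = √(1+α₂/α₁) − √(α₂/α₁) ∈ (0,1)`. -/
theorem thomas_fermi_radius_optimization
    (α₁ α₂ : ℝ) (hα₁ : 0 < α₁) (hα₂ : 0 < α₂)
    (r₁ : ℝ) (hr₁ : r₁ = (2 * α₁ / π) ^ ((1 : ℝ) / 4))
    (f : ℝ → ℝ)
    (hf : ∀ t : ℝ, f t = if t < 1
      then π / 24 * r₁ ^ 6 * (6 * t + 3 / t - t ^ 3) + α₂ * r₁ ^ 2 * t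
      else π / 3 * r₁ ^ 6 + α₂ * r₁ ^ 2 * t)
    (t₀ : ℝ) (ht₀ : t₀ = Real.sqrt (1 + α₂ / α₁) - Real.sqrt (α₂ / α₁)) :
    ContDiffOn ℝ 1 f (Ioi 0) ∧
    StrictConvexOn ℝ (Ioo 0 1) f ∧
    Tendsto f (nhdsWithin 0 (Ioi 0)) atTop ∧
    StrictMonoOn f (Ici 1) ∧
    t₀ ∈ Ioo (0 : ℝ) 1 ∧
    (∀ t ∈ Ioi (0 : ℝ), t ≠ t₀ → f t₀ < f t) := by
  have hc : 0 ≤ α₂ / α₁ := by positivity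
  have hr₁_pos : 0 < r₁ := hr₁ ▸ rpow_pos_of_pos (by positivity) _
  have hr₁_four : π * r₁ ^ 4 = 2 * α₁ := by
    rw [hr₁, ← rpow_natCast, ← rpow_mul (by positivity)]
    norm_num
    field_simp
  have hfe : f = energy (π / 24 * r₁ ^ 6) (α₂ * r₁ ^ 2) := by
    funext t
    rw [hf, energy]
    split_ifs <;> ring
  have ht₀_pos : 0 < t₀ := ht₀ ▸ sqrt_one_add_sub_sqrt_pos hc
  have hs₀ : t₀⁻¹ - t₀ = 2 * √(α₂ / α₁) := by
    rw [ht₀, inv_sqrt_one_add_sub_sqrt hc]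
    ring
  have hs₀_pos : 0 < t₀⁻¹ - t₀ := by rw [hs₀]; positivity
  have hb : 3 * (π / 24 * r₁ ^ 6) * (t₀⁻¹ - t₀) ^ 2 = α₂ * r₁ ^ 2 := by
    rw [hs₀, mul_pow, sq_sqrt hc]
    field_simp
    linear_combination 12 * hr₁_four
  have ha : 0 < π / 24 * r₁ ^ 6 := by positivity
  subst hfe
  exact ⟨contDiffOn_energy, strictConvexOn_energy ha, tendsto_energy_nhdsGT_zero ha,
    strictMonoOn_energy (by positivity), ⟨ht₀_pos, (inv_sub_self_pos_iff ht₀_pos).1 hs₀_pos⟩,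
    fun t ht hne => energy_lt_energy_of_ne ha ht₀_pos hs₀_pos hb ht hne⟩
end

section
/- Let ρ̄(x) = (R² − |x|²)_+ on ℝ² with R > 1, and let B be the unit ball with V(B) := ∫_B ρ̄. Then there exists c > 0 such that for every measurable set E ⊂ ℝ² with ∫_E ρ̄ = ∫_B ρ̄, one has ∫_{E^c} ρ̄² − ∫_{B^c} ρ̄² ≥ c (∫_{E Δ B} ρ̄)². -/
/-!
Since `ρ̄² - (R² - 1) ρ̄ = ρ̄ (1 - |x|²)` changes sign exactly across `∂B`, the mass constraint
turns the deficit into `∫_{E Δ B} ρ̄ |1 - |x|²|` (a bathtub identity). The weight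
`|1 - |x|²|` is at most `t` only on an annulus of area at most `2πt`, which carries `ρ̄`-mass at
most `2πR²t`. Taking `t = m / (4πR²)` with `m = ∫_{E Δ B} ρ̄`, at least half of `m` sits where the
weight exceeds `t`, so the deficit is at least `t m / 2 = m² / (8πR²)`.
-/

open Real Set Metric MeasureTheory

section SetIntegral

variable {α : Type*} [MeasurableSpace α] {μ : Measure α} {E B : Set α}

theorem setIntegral_sub_setIntegral_eq_sdiff {f : α → ℝ} (hE : MeasurableSet E)
    (hB : MeasurableSet B) (hf : Integrable f μ) :
    ∫ x in E, f x ∂μ - ∫ x in B, f x ∂μ = ∫ x in E \ B, f x ∂μ - ∫ x in B \ E, f x ∂μ := by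
  have hE' := integral_inter_add_sdiff (s := E) hB hf.integrableOn
  have hB' := integral_inter_add_sdiff (s := B) hE hf.integrableOn
  rw [inter_comm] at hB'
  linarith

theorem setIntegral_compl_sub_setIntegral_compl_eq_setIntegral_symmDiff
    {f u : α → ℝ} (a : ℝ) (hE : MeasurableSet E) (hB : MeasurableSet B)
    (hf : Integrable f μ) (hu : Integrable u μ)
    (hmass : ∫ x in E, f x ∂μ = ∫ x in B, f x ∂μ)
    (hin : ∀ x ∈ B, a * f x ≤ u x) (hout : ∀ x ∉ B, u x ≤ a * f x) :
    ∫ x in Eᶜ, u x ∂μ - ∫ x in Bᶜ, u x ∂μ = ∫ x in symmDiff E B, |u x - a * f x| ∂μ := by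
  have hcompl :
      ∫ x in Eᶜ, u x ∂μ - ∫ x in Bᶜ, u x ∂μ = ∫ x in B, u x ∂μ - ∫ x in E, u x ∂μ := by
    linarith [integral_add_compl hE hu, integral_add_compl hB hu]
  have hf_sdiff := setIntegral_sub_setIntegral_eq_sdiff hE hB hf
  have hu_sdiff := setIntegral_sub_setIntegral_eq_sdiff hB hE hu
  have hEB : ∫ x in E \ B, |u x - a * f x| ∂μ =
      a * ∫ x in E \ B, f x ∂μ - ∫ x in E \ B, u x ∂μ := by
    rw [setIntegral_congr_fun (hE.diff hB) fun x hx => abs_of_nonpos (sub_nonpos.2 (hout x hx.2)),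
      integral_neg, integral_sub hu.integrableOn (hf.const_mul a).integrableOn, integral_const_mul]
    ring
  have hBE : ∫ x in B \ E, |u x - a * f x| ∂μ =
      ∫ x in B \ E, u x ∂μ - a * ∫ x in B \ E, f x ∂μ := by
    rw [setIntegral_congr_fun (hB.diff hE) fun x hx => abs_of_nonneg (sub_nonneg.2 (hin x hx.1)),
      integral_sub hu.integrableOn (hf.const_mul a).integrableOn, integral_const_mul]
  have hg : Integrable (fun x => |u x - a * f x|) μ := (hu.sub (hf.const_mul a)).abs
  rw [Set.symmDiff_def, setIntegral_union disjoint_sdiff_sdiff (hB.diff hE) hg.integrableOn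
    hg.integrableOn, hEB, hBE]
  linear_combination hcompl + hu_sdiff + a * hf_sdiff - a * hmass

theorem sq_setIntegral_le_of_setIntegral_sublevel_le {f w : α → ℝ} {S : Set α} {K : ℝ}
    (hK : 0 < K) (hS : MeasurableSet S) (hw : Measurable w) (hf : Integrable f μ)
    (hfw : IntegrableOn (fun x => f x * w x) S μ) (hf0 : ∀ x, 0 ≤ f x) (hw0 : ∀ x, 0 ≤ w x)
    (hsub : ∀ t, 0 ≤ t → ∫ x in {x | w x ≤ t}, f x ∂μ ≤ K * t) :
    (∫ x in S, f x ∂μ) ^ 2 ≤ 4 * K * ∫ x in S, f x * w x ∂μ := by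
  set M := ∫ x in S, f x ∂μ
  set t := M / (2 * K)
  have ht : 0 ≤ t := div_nonneg (setIntegral_nonneg hS fun x _ => hf0 x) (by positivity)
  set T := {x | t < w x}
  have hT : MeasurableSet T := measurableSet_lt measurable_const hw
  have hlow : ∫ x in S \ T, f x ∂μ ≤ K * t :=
    (setIntegral_mono_set hf.integrableOn (ae_of_all _ hf0)
      (Filter.Eventually.of_forall fun x hx => not_lt.1 hx.2)).trans (hsub t ht)
  have hsplit : ∫ x in S ∩ T, f x ∂μ + ∫ x in S \ T, f x ∂μ = M :=
    integral_inter_add_sdiff hT hf.integrableOn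
  have hK4 : 0 ≤ 4 * K := by positivity
  calc M ^ 2 = 4 * K * (t * (M - K * t)) := by simp only [t]; field_simp; ring
    _ ≤ 4 * K * (t * ∫ x in S ∩ T, f x ∂μ) := by gcongr; linarith
    _ = 4 * K * ∫ x in S ∩ T, t * f x ∂μ := by rw [integral_const_mul]
    _ ≤ 4 * K * ∫ x in S ∩ T, f x * w x ∂μ := mul_le_mul_of_nonneg_left
      (setIntegral_mono_on (hf.const_mul t).integrableOn (hfw.mono_set inter_subset_left)
        (hS.inter hT) fun x hx => by nlinarith [hf0 x, hx.2.out]) hK4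
    _ ≤ 4 * K * ∫ x in S, f x * w x ∂μ := mul_le_mul_of_nonneg_left
      (setIntegral_mono_set hfw (ae_of_all _ fun x => mul_nonneg (hf0 x) (hw0 x))
        (Filter.Eventually.of_forall inter_subset_left)) hK4

end SetIntegral

theorem EuclideanSpace.volume_setOf_abs_sub_sq_norm_le_le (a : ℝ) {t : ℝ} (ht : 0 ≤ t) :
    volume {x : EuclideanSpace ℝ (Fin 2) | |a - ‖x‖ ^ 2| ≤ t} ≤ ENNReal.ofReal (2 * π * t) := by
  have hsub : {x : EuclideanSpace ℝ (Fin 2) | |a - ‖x‖ ^ 2| ≤ t} ⊆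
      closedBall 0 √(a + t) \ ball 0 √(a - t) := by
    intro x hx
    obtain ⟨hlo, hhi⟩ := abs_le.1 hx.out
    simp only [mem_sdiff, mem_closedBall, mem_ball, dist_zero_right, not_lt]
    exact ⟨Real.le_sqrt_of_sq_le (by linarith),
      (Real.sqrt_le_left (norm_nonneg x)).2 (by linarith)⟩
  have hball : ball (0 : EuclideanSpace ℝ (Fin 2)) √(a - t) ⊆ closedBall 0 √(a + t) :=
    ball_subset_closedBall.trans (closedBall_subset_closedBall (Real.sqrt_le_sqrt (by linarith)))
  refine (measure_mono hsub).trans ?_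
  rw [measure_sdiff hball measurableSet_ball.nullMeasurableSet measure_ball_lt_top.ne,
    EuclideanSpace.volume_closedBall_fin_two, EuclideanSpace.volume_ball_fin_two,
    ← ENNReal.ofReal_pow (Real.sqrt_nonneg _), ← ENNReal.ofReal_pow (Real.sqrt_nonneg _),
    Real.sq_sqrt', Real.sq_sqrt', ← ENNReal.ofReal_mul (le_max_right _ _),
    ← ENNReal.ofReal_mul (le_max_right _ _), ← ENNReal.ofReal_sub _ (by positivity)]
  refine ENNReal.ofReal_le_ofReal ?_
  have hmax : max (a + t) 0 ≤ max (a - t) 0 + 2 * t :=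
    max_le (by linarith [le_max_left (a - t) 0]) (by linarith [le_max_right (a - t) 0])
  linarith [mul_le_mul_of_nonneg_left hmax pi_pos.le]

noncomputable def thomasFermi {V : Type*} [Norm V] (R : ℝ) (x : V) : ℝ :=
  max (R ^ 2 - ‖x‖ ^ 2) 0

section ThomasFermi

variable {V : Type*} [NormedAddCommGroup V] (R : ℝ)

theorem thomasFermi_nonneg (x : V) : 0 ≤ thomasFermi R x := le_max_right _ _

theorem thomasFermi_le_sq (x : V) : thomasFermi R x ≤ R ^ 2 :=
  max_le (by nlinarith [sq_nonneg ‖x‖]) (sq_nonneg R)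

@[fun_prop]
theorem continuous_thomasFermi : Continuous fun x : V => thomasFermi R x := by
  unfold thomasFermi; fun_prop

theorem hasCompactSupport_thomasFermi [ProperSpace V] :
    HasCompactSupport (thomasFermi (V := V) R) :=
  .intro (isCompact_closedBall 0 |R|) fun x hx => by
    rw [mem_closedBall, dist_zero_right, not_le] at hx
    have : R ^ 2 < ‖x‖ ^ 2 := by
      rw [← sq_abs]; exact pow_lt_pow_left₀ hx (abs_nonneg R) two_ne_zero
    exact max_eq_right (by linarith)

theorem integrable_thomasFermi_mul [ProperSpace V] [MeasurableSpace V] [OpensMeasurableSpace V]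
    (μ : Measure V) [IsFiniteMeasureOnCompacts μ] {g : V → ℝ} (hg : Continuous g) :
    Integrable (fun x => thomasFermi R x * g x) μ :=
  ((continuous_thomasFermi R).mul hg).integrable_of_hasCompactSupport
    (hasCompactSupport_thomasFermi R).mul_right

theorem thomasFermi_sq_sub_mul (x : V) :
    thomasFermi R x ^ 2 - (R ^ 2 - 1) * thomasFermi R x = thomasFermi R x * (1 - ‖x‖ ^ 2) := by
  unfold thomasFermi
  rcases le_total (R ^ 2 - ‖x‖ ^ 2) 0 with h | h <;>
    simp only [h, max_eq_left, max_eq_right] <;> ring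

theorem sub_one_mul_thomasFermi_le_sq {x : V} (hx : ‖x‖ ≤ 1) :
    (R ^ 2 - 1) * thomasFermi R x ≤ thomasFermi R x ^ 2 := by
  have := mul_nonneg (thomasFermi_nonneg R x) (by nlinarith [norm_nonneg x] : 0 ≤ 1 - ‖x‖ ^ 2)
  linarith [thomasFermi_sq_sub_mul R x]

theorem sq_thomasFermi_le_sub_one_mul {x : V} (hx : 1 ≤ ‖x‖) :
    thomasFermi R x ^ 2 ≤ (R ^ 2 - 1) * thomasFermi R x := by
  have := mul_nonpos_of_nonneg_of_nonpos (thomasFermi_nonneg R x)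
    (by nlinarith : 1 - ‖x‖ ^ 2 ≤ 0)
  linarith [thomasFermi_sq_sub_mul R x]

end ThomasFermi

theorem setIntegral_thomasFermi_abs_one_sub_sq_norm_le (R : ℝ) {t : ℝ} (ht : 0 ≤ t) :
    ∫ x in {x : EuclideanSpace ℝ (Fin 2) | |1 - ‖x‖ ^ 2| ≤ t}, thomasFermi R x
      ≤ 2 * π * R ^ 2 * t := by
  have hvol := EuclideanSpace.volume_setOf_abs_sub_sq_norm_le_le 1 ht
  calc ∫ x in {x : EuclideanSpace ℝ (Fin 2) | |1 - ‖x‖ ^ 2| ≤ t}, thomasFermi R x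
      ≤ R ^ 2 * volume.real {x : EuclideanSpace ℝ (Fin 2) | |1 - ‖x‖ ^ 2| ≤ t} :=
        (Real.le_norm_self _).trans (norm_setIntegral_le_of_norm_le_const
          (hvol.trans_lt ENNReal.ofReal_lt_top) fun x _ =>
            (Real.norm_of_nonneg (thomasFermi_nonneg R x)).trans_le (thomasFermi_le_sq R x))
    _ ≤ R ^ 2 * (2 * π * t) :=
        mul_le_mul_of_nonneg_left (ENNReal.toReal_le_of_le_ofReal (by positivity) hvol)
          (sq_nonneg R)
    _ = 2 * π * R ^ 2 * t := by ring

/-- Quantitative stability of the centered unit ball for the weighted volume term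
`∫_{Eᶜ} ρ̄²`, with weight `ρ̄(x) = (R² − |x|²)₊`: for every measurable set `E` of the same
`ρ̄`-mass as the unit ball `B`, the deficit controls the square of the `ρ̄`-mass of the
symmetric difference `E Δ B`. -/
theorem volume_term_stability
    (R : ℝ) (hR : 1 < R)
    (ρ : EuclideanSpace ℝ (Fin 2) → ℝ)
    (hρ : ∀ x, ρ x = max (R ^ 2 - ‖x‖ ^ 2) 0) :
    ∃ c : ℝ, 0 < c ∧
      ∀ E : Set (EuclideanSpace ℝ (Fin 2)), MeasurableSet E →
        (∫ x in E, ρ x) = (∫ x in ball (0 : EuclideanSpace ℝ (Fin 2)) 1, ρ x) →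
        (∫ x in Eᶜ, (ρ x) ^ 2) - (∫ x in (ball (0 : EuclideanSpace ℝ (Fin 2)) 1)ᶜ, (ρ x) ^ 2)
          ≥ c * (∫ x in symmDiff E (ball (0 : EuclideanSpace ℝ (Fin 2)) 1), ρ x) ^ 2 := by
  obtain rfl : ρ = thomasFermi R := funext hρ
  have hw : Continuous fun x : EuclideanSpace ℝ (Fin 2) => |1 - ‖x‖ ^ 2| := by fun_prop
  have hρ_int : Integrable (thomasFermi (V := EuclideanSpace ℝ (Fin 2)) R) :=
    (continuous_thomasFermi R).integrable_of_hasCompactSupport (hasCompactSupport_thomasFermi R)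
  have hρsq_int : Integrable fun x : EuclideanSpace ℝ (Fin 2) => thomasFermi R x ^ 2 := by
    simpa only [sq] using integrable_thomasFermi_mul R volume (continuous_thomasFermi R)
  refine ⟨1 / (8 * π * R ^ 2), by positivity, fun E hE hmass => ?_⟩
  rw [ge_iff_le, setIntegral_compl_sub_setIntegral_compl_eq_setIntegral_symmDiff (R ^ 2 - 1) hE
    measurableSet_ball hρ_int hρsq_int hmass
    (fun x hx => sub_one_mul_thomasFermi_le_sq R (mem_ball_zero_iff.1 hx).le)
    (fun x hx => sq_thomasFermi_le_sub_one_mul R (not_lt.1 (mt mem_ball_zero_iff.2 hx)))]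
  simp_rw [thomasFermi_sq_sub_mul, abs_mul, abs_of_nonneg (thomasFermi_nonneg R _)]
  have key := sq_setIntegral_le_of_setIntegral_sublevel_le (by positivity)
    (hE.symmDiff (measurableSet_ball (x := 0) (ε := 1))) hw.measurable hρ_int
    (integrable_thomasFermi_mul R volume hw).integrableOn (thomasFermi_nonneg R)
    (fun x => abs_nonneg _)
    (fun t ht => setIntegral_thomasFermi_abs_one_sub_sq_norm_le R ht)
  rw [div_mul_eq_mul_div, one_mul, div_le_iff₀ (by positivity)]
  linarith
end

section
/- There exists a constant c > 0 such that for every T ∈ (0, 1/2] and every pair of C¹ functions y_1, y_2 : [−T, T] → (0, 1/2) with y_1 ≤ y_2, y_1(±T) = y_2(±T), one has (1/2)∫_{−T}^{T} (y_2² − y_1²) ≤ c ( ∫_{−T}^{T} y_1^{3/2}√(1 + y_1'²) + ∫_{−T}^{T} y_2^{3/2}√(1 + y_2'²) )^{6/5}, provided y_1 is even and non-decreasing on [0,T] and y_2 is even and non-increasing on [0,T]. -/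
/-!
Write `a = y₂ 0` and `b = y₁ 0` for the extreme heights and `e = y₁ T = y₂ T` for the common
endpoint height; evenness and monotonicity give `b ≤ y₁ ≤ e ≤ y₂ ≤ a` on `[-T, T]`. Since
`(y ^ (5/2))' = (5/2) y ^ (3/2) y'`, each weighted length dominates the change of `y ^ (5/2)`
between `0` and `T`: `a ^ (5/2) - e ^ (5/2) ≲ F(y₂)` and `e ^ (5/2) - b ^ (5/2) ≲ F(y₁)`.

If `e ≥ a / 4`, then `y₂ ≥ a / 4` gives `T a ^ (3/2) ≲ F(y₂)`, and
`(√a - √b) ^ 5 ≤ a ^ (5/2) - b ^ (5/2) ≲ F`, so the volume, at most `2T (a² - b²) ≲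
T a ^ (3/2) (√a - √b)`, is `≲ F ^ (6/5)`. If `e < a / 4`, the top graph drops by a fixed fraction
of `a ^ (5/2)`, so `a ^ (5/2) ≲ F(y₂)`, and the volume is at most `∫ y₂² ≤ √a F(y₂) ≲ F ^ (6/5)`.
-/

open Real Set intervalIntegral MeasureTheory

/-- The paper's perimeter `F₁` of the graph of `y` is `weightedGraphLength (3 / 2) y (-T) T`. -/
noncomputable def weightedGraphLength (p : ℝ) (y : ℝ → ℝ) (a b : ℝ) : ℝ :=
  ∫ x in a..b, y x ^ p * √(1 + deriv y x ^ 2)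

theorem one_le_sqrt_one_add_sq (v : ℝ) : 1 ≤ √(1 + v ^ 2) :=
  one_le_sqrt.2 (le_add_of_nonneg_right (sq_nonneg v))

section GraphIntegrals

variable {y : ℝ → ℝ} {a b : ℝ}

theorem intervalIntegrable_comp_deriv (hab : a < b) (hy : ContDiffOn ℝ 1 y (Icc a b))
    {F : ℝ → ℝ → ℝ} (hF : Continuous (Function.uncurry F)) :
    IntervalIntegrable (fun x => F (y x) (deriv y x)) volume a b := by
  have hcont : ContinuousOn (fun x => F (y x) (derivWithin y (Icc a b) x)) (Icc a b) :=
    hF.comp_continuousOn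
      (hy.continuousOn.prodMk (hy.continuousOn_derivWithin (uniqueDiffOn_Icc hab) le_rfl))
  rw [intervalIntegrable_iff_integrableOn_Ioo_of_le hab.le]
  refine (hcont.integrableOn_Icc.mono_set Ioo_subset_Icc_self).congr_fun
    (fun x hx => ?_) measurableSet_Ioo
  simp only [derivWithin_of_mem_nhds (Icc_mem_nhds hx.1 hx.2)]

theorem intervalIntegrable_weightedGraphLength {p : ℝ} (hp : 0 ≤ p) (hab : a < b)
    (hy : ContDiffOn ℝ 1 y (Icc a b)) :
    IntervalIntegrable (fun x => y x ^ p * √(1 + deriv y x ^ 2)) volume a b :=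
  intervalIntegrable_comp_deriv hab hy (F := fun u v => u ^ p * √(1 + v ^ 2))
    ((continuous_fst.rpow_const fun _ => Or.inr hp).mul (by fun_prop))

variable {p : ℝ}

theorem weightedGraphLength_nonneg (hab : a ≤ b) (hy0 : ∀ x ∈ Icc a b, 0 ≤ y x) :
    0 ≤ weightedGraphLength p y a b :=
  integral_nonneg hab fun x hx => mul_nonneg (rpow_nonneg (hy0 x hx) p) (sqrt_nonneg _)

theorem weightedGraphLength_mono_interval {c d : ℝ} (hp : 0 ≤ p) (hca : c ≤ a) (hab : a ≤ b)
    (hbd : b ≤ d) (hcd : c < d) (hy : ContDiffOn ℝ 1 y (Icc c d))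
    (hy0 : ∀ x ∈ Icc c d, 0 ≤ y x) :
    weightedGraphLength p y a b ≤ weightedGraphLength p y c d := by
  refine integral_mono_interval hca hab hbd ?_ (intervalIntegrable_weightedGraphLength hp hcd hy)
  filter_upwards [ae_restrict_mem measurableSet_Ioc] with x hx
  exact mul_nonneg (rpow_nonneg (hy0 x (Ioc_subset_Icc_self hx)) p) (sqrt_nonneg _)

theorem mul_rpow_le_weightedGraphLength {m : ℝ} (hp : 0 ≤ p) (hab : a < b)
    (hy : ContDiffOn ℝ 1 y (Icc a b)) (hm : 0 ≤ m) (hmy : ∀ x ∈ Icc a b, m ≤ y x) :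
    (b - a) * m ^ p ≤ weightedGraphLength p y a b := by
  rw [← smul_eq_mul, ← intervalIntegral.integral_const]
  refine integral_mono_on hab.le intervalIntegrable_const
    (intervalIntegrable_weightedGraphLength hp hab hy) fun x hx => ?_
  calc m ^ p ≤ y x ^ p := rpow_le_rpow hm (hmy x hx) hp
    _ ≤ y x ^ p * √(1 + deriv y x ^ 2) :=
      le_mul_of_one_le_right (rpow_nonneg (hm.trans (hmy x hx)) p) (one_le_sqrt_one_add_sq _)

theorem integral_sq_sub_sq_le_mul_weightedGraphLength {f : ℝ → ℝ} {M : ℝ} (hp : 0 ≤ p)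
    (hp2 : p ≤ 2) (hab : a < b) (hf : ContinuousOn f (Icc a b)) (hy : ContDiffOn ℝ 1 y (Icc a b))
    (hyM : ∀ x ∈ Icc a b, y x ∈ Icc 0 M) :
    ∫ x in a..b, (y x ^ 2 - f x ^ 2) ≤ M ^ (2 - p) * weightedGraphLength p y a b := by
  rw [weightedGraphLength, ← intervalIntegral.integral_const_mul]
  refine integral_mono_on hab.le
    (((hy.continuousOn.pow 2).sub (hf.pow 2)).intervalIntegrable_of_Icc hab.le)
    ((intervalIntegrable_weightedGraphLength hp hab hy).const_mul _) fun x hx => ?_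
  obtain ⟨hy0, hyM⟩ := hyM x hx
  have hyp : 0 ≤ y x ^ p := rpow_nonneg hy0 p
  calc y x ^ 2 - f x ^ 2 ≤ y x ^ (2 - p) * y x ^ p := by
        rw [← rpow_add_of_nonneg hy0 (by linarith) hp, sub_add_cancel, rpow_two]
        linarith [sq_nonneg (f x)]
    _ ≤ M ^ (2 - p) * y x ^ p := by gcongr
    _ ≤ M ^ (2 - p) * (y x ^ p * √(1 + deriv y x ^ 2)) :=
      mul_le_mul_of_nonneg_left (le_mul_of_one_le_right hyp (one_le_sqrt_one_add_sq _))
        (rpow_nonneg (hy0.trans hyM) _)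

theorem integral_sq_sub_sq_le {f g : ℝ → ℝ} {m M : ℝ} (hab : a ≤ b)
    (hf : ContinuousOn f (Icc a b)) (hg : ContinuousOn g (Icc a b)) (hm : 0 ≤ m)
    (hmf : ∀ x ∈ Icc a b, m ≤ f x) (hgM : ∀ x ∈ Icc a b, g x ∈ Icc 0 M) :
    ∫ x in a..b, (g x ^ 2 - f x ^ 2) ≤ (b - a) * (M ^ 2 - m ^ 2) := by
  rw [← smul_eq_mul, ← intervalIntegral.integral_const]
  refine integral_mono_on hab (((hg.pow 2).sub (hf.pow 2)).intervalIntegrable_of_Icc hab)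
    intervalIntegrable_const fun x hx => ?_
  exact sub_le_sub (pow_le_pow_left₀ (hgM x hx).1 (hgM x hx).2 2)
    (pow_le_pow_left₀ hm (hmf x hx) 2)

theorem abs_rpow_sub_le_weightedGraphLength (hp : 0 ≤ p) (hab : a ≤ b)
    (hy : ContDiffOn ℝ 1 y (Icc a b)) (hy0 : ∀ x ∈ Icc a b, 0 ≤ y x) :
    |y b ^ (p + 1) - y a ^ (p + 1)| ≤ (p + 1) * weightedGraphLength p y a b := by
  rcases hab.eq_or_lt with rfl | hab
  · simp [weightedGraphLength]
  have hp1 : 1 ≤ p + 1 := by linarith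
  have hcont : ContinuousOn (fun x => y x ^ (p + 1)) (Icc a b) :=
    hy.continuousOn.rpow_const fun _ _ => Or.inr (zero_le_one.trans hp1)
  have hderiv : ∀ x ∈ Ioo a b,
      HasDerivAt (fun x => y x ^ (p + 1)) (deriv y x * (p + 1) * y x ^ p) x := fun x hx => by
    have hdiff := (hy.differentiableOn one_ne_zero).differentiableAt (Icc_mem_nhds hx.1 hx.2)
    simpa using hdiff.hasDerivAt.rpow_const (p := p + 1) (Or.inr hp1)
  have hF : Continuous (Function.uncurry fun u v : ℝ => v * (p + 1) * u ^ p) :=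
    (continuous_snd.mul continuous_const).mul (continuous_fst.rpow_const fun _ => Or.inr hp)
  have hint := intervalIntegrable_comp_deriv hab hy hF
  rw [← integral_eq_sub_of_hasDerivAt_of_le hab.le hcont hderiv hint, weightedGraphLength,
    ← intervalIntegral.integral_const_mul]
  refine (abs_integral_le_integral_abs hab.le).trans (integral_mono_on hab.le hint.abs
    ((intervalIntegrable_weightedGraphLength hp hab hy).const_mul _) fun x hx => ?_)
  have hyp : 0 ≤ y x ^ p := rpow_nonneg (hy0 x hx) p
  rw [abs_mul, abs_mul, abs_of_nonneg hyp, abs_of_nonneg (by linarith : (0 : ℝ) ≤ p + 1)]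
  calc |deriv y x| * (p + 1) * y x ^ p = (p + 1) * (y x ^ p * |deriv y x|) := by ring
    _ ≤ (p + 1) * (y x ^ p * √(1 + deriv y x ^ 2)) := by
      gcongr
      exact abs_le_sqrt (le_add_of_nonneg_left zero_le_one)

theorem abs_rpow_sub_le_weightedGraphLength_of_symmetric {T : ℝ} (hp : 0 ≤ p) (hT : 0 < T)
    (hy : ContDiffOn ℝ 1 y (Icc (-T) T)) (hy0 : ∀ x ∈ Icc (-T) T, 0 ≤ y x) :
    |y T ^ (p + 1) - y 0 ^ (p + 1)| ≤ (p + 1) * weightedGraphLength p y (-T) T := by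
  have hsub : Icc 0 T ⊆ Icc (-T) T := Icc_subset_Icc (by linarith) le_rfl
  refine (abs_rpow_sub_le_weightedGraphLength hp hT.le (hy.mono hsub)
    fun x hx => hy0 x (hsub hx)).trans ?_
  gcongr
  exact weightedGraphLength_mono_interval hp (by linarith) hT.le le_rfl (by linarith) hy hy0

end GraphIntegrals

section EvenMonotone

variable {y : ℝ → ℝ} {T x : ℝ}

theorem apply_abs_of_even (heven : ∀ x ∈ Icc (-T) T, y (-x) = y x) (hx : x ∈ Icc (-T) T) :
    y |x| = y x := by
  rcases abs_choice x with h | h <;> rw [h]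
  exact heven x hx

theorem MonotoneOn.apply_mem_Icc_of_even (hmono : MonotoneOn y (Icc 0 T))
    (heven : ∀ x ∈ Icc (-T) T, y (-x) = y x) (hx : x ∈ Icc (-T) T) : y x ∈ Icc (y 0) (y T) := by
  have habs : |x| ∈ Icc 0 T := ⟨abs_nonneg x, abs_le.2 hx⟩
  have hT : 0 ≤ T := habs.1.trans habs.2
  rw [← apply_abs_of_even heven hx]
  exact ⟨hmono (left_mem_Icc.2 hT) habs (abs_nonneg x), hmono habs (right_mem_Icc.2 hT) habs.2⟩

theorem AntitoneOn.apply_mem_Icc_of_even (hanti : AntitoneOn y (Icc 0 T))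
    (heven : ∀ x ∈ Icc (-T) T, y (-x) = y x) (hx : x ∈ Icc (-T) T) : y x ∈ Icc (y T) (y 0) := by
  have habs : |x| ∈ Icc 0 T := ⟨abs_nonneg x, abs_le.2 hx⟩
  have hT : 0 ≤ T := habs.1.trans habs.2
  rw [← apply_abs_of_even heven hx]
  exact ⟨hanti habs (right_mem_Icc.2 hT) habs.2, hanti (left_mem_Icc.2 hT) habs (abs_nonneg x)⟩

end EvenMonotone

theorem le_two_mul_of_pow_five_le {u s : ℝ} (hs : 0 ≤ s) (h : u ^ 5 ≤ 32 * s ^ 5) : u ≤ 2 * s :=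
  le_of_pow_le_pow_left₀ (n := 5) (by norm_num) (by positivity) (by rw [mul_pow]; linarith)

theorem le_sixth_pow_of_graph_bounds {t α β ε s A B V : ℝ} (ht : 0 ≤ t) (hβ : 0 ≤ β)
    (hβα : β ≤ α) (hε : 0 ≤ ε) (hs : 0 ≤ s) (hA : 0 ≤ A) (hB : 0 ≤ B) (hAB : A + B = s ^ 5)
    (hlen : t * ε ^ 3 ≤ B) (htop : α ^ 5 - ε ^ 5 ≤ 5 / 2 * B)
    (hbot : ε ^ 5 - β ^ 5 ≤ 5 / 2 * A) (hV₁ : V ≤ t * (α ^ 4 - β ^ 4)) (hV₂ : V ≤ α * B) :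
    V ≤ 64 * s ^ 6 := by
  rcases le_or_gt α (2 * ε) with hαε | hεα
  · have hα3 : t * α ^ 3 ≤ 8 * s ^ 5 := by
      have : α ^ 3 ≤ (2 * ε) ^ 3 := pow_le_pow_left₀ (hβ.trans hβα) hαε 3
      nlinarith
    have hgap : α - β ≤ 2 * s := by
      have := pow_add_pow_le (sub_nonneg.2 hβα) hβ (n := 5) (by norm_num)
      rw [sub_add_cancel] at this
      exact le_two_mul_of_pow_five_le hs (by linarith)
    have h4 : α ^ 4 - β ^ 4 ≤ 4 * α ^ 3 * (α - β) := by
      have hα : 0 ≤ α := hβ.trans hβα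
      have hsum : α ^ 3 + α ^ 2 * β + α * β ^ 2 + β ^ 3 ≤ 4 * α ^ 3 := by
        nlinarith [mul_le_mul_of_nonneg_left hβα (sq_nonneg α),
          mul_le_mul_of_nonneg_left (pow_le_pow_left₀ hβ hβα 2) hα, pow_le_pow_left₀ hβ hβα 3]
      calc α ^ 4 - β ^ 4 = (α - β) * (α ^ 3 + α ^ 2 * β + α * β ^ 2 + β ^ 3) := by ring
        _ ≤ (α - β) * (4 * α ^ 3) := mul_le_mul_of_nonneg_left hsum (sub_nonneg.2 hβα)
        _ = 4 * α ^ 3 * (α - β) := by ring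
    calc V ≤ t * (4 * α ^ 3 * (α - β)) := hV₁.trans (by gcongr)
      _ = 4 * (t * α ^ 3) * (α - β) := by ring
      _ ≤ 4 * (8 * s ^ 5) * (2 * s) := by gcongr
      _ = 64 * s ^ 6 := by ring
  · have hα : α ≤ 2 * s := by
      have : 32 * ε ^ 5 ≤ α ^ 5 := by
        have := pow_le_pow_left₀ (by positivity) hεα.le 5
        linarith
      exact le_two_mul_of_pow_five_le hs (by nlinarith)
    calc V ≤ α * B := hV₂
      _ ≤ 2 * s * s ^ 5 := by gcongr; linarith
      _ ≤ 64 * s ^ 6 := by nlinarith [pow_nonneg hs 6]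

theorem le_rpow_six_fifths_of_graph_bounds {t a b e A B V : ℝ} (ht : 0 ≤ t) (hb : 0 ≤ b)
    (hba : b ≤ a) (he : 0 ≤ e) (hA : 0 ≤ A) (hB : 0 ≤ B) (hlen : t * e ^ ((3 : ℝ) / 2) ≤ B)
    (htop : a ^ ((5 : ℝ) / 2) - e ^ ((5 : ℝ) / 2) ≤ 5 / 2 * B)
    (hbot : e ^ ((5 : ℝ) / 2) - b ^ ((5 : ℝ) / 2) ≤ 5 / 2 * A)
    (hV₁ : V ≤ t * (a ^ 2 - b ^ 2)) (hV₂ : V ≤ a ^ (2 - (3 : ℝ) / 2) * B) :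
    V ≤ 64 * (A + B) ^ ((6 : ℝ) / 5) := by
  have ha : 0 ≤ a := hb.trans hba
  norm_num at hV₂
  simp only [rpow_div_two_eq_sqrt _ ha, rpow_div_two_eq_sqrt _ hb, rpow_div_two_eq_sqrt _ he,
    rpow_ofNat, rpow_one] at hlen htop hbot hV₂
  have hsqrt_pow_four (x : ℝ) (hx : 0 ≤ x) : √x ^ 4 = x ^ 2 := by
    rw [show 4 = 2 * 2 from rfl, pow_mul, sq_sqrt hx]
  set s := (A + B) ^ ((1 : ℝ) / 5)
  have hs5 : A + B = s ^ 5 := by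
    rw [← rpow_natCast, ← rpow_mul (by positivity)]; norm_num
  have hs6 : (A + B) ^ ((6 : ℝ) / 5) = s ^ 6 := by
    rw [← rpow_natCast, ← rpow_mul (by positivity)]; norm_num
  rw [hs6]
  refine le_sixth_pow_of_graph_bounds ht (sqrt_nonneg b) (sqrt_le_sqrt hba) (sqrt_nonneg e)
    (by positivity) hA hB hs5 hlen htop hbot ?_ hV₂
  rwa [hsqrt_pow_four a ha, hsqrt_pow_four b hb]

/-- Graph version of the weighted isoperimetric inequality `V₁(F) ≲ F₁(F)^{6/5}` for sets
between two graphs in the strip, with weight `y` for volume and `y^{3/2}` for perimeter. -/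
theorem weighted_isoperimetric_graphs :
    ∃ c : ℝ, 0 < c ∧
      ∀ T : ℝ, T ∈ Ioc (0 : ℝ) (1 / 2) →
      ∀ y₁ y₂ : ℝ → ℝ,
        ContDiffOn ℝ 1 y₁ (Icc (-T) T) → ContDiffOn ℝ 1 y₂ (Icc (-T) T) →
        (∀ x ∈ Icc (-T) T, y₁ x ∈ Ioo (0 : ℝ) (1 / 2) ∧ y₂ x ∈ Ioo (0 : ℝ) (1 / 2) ∧
          y₁ x ≤ y₂ x) →
        y₁ (-T) = y₂ (-T) → y₁ T = y₂ T →
        (∀ x ∈ Icc (-T) T, y₁ (-x) = y₁ x ∧ y₂ (-x) = y₂ x) →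
        MonotoneOn y₁ (Icc 0 T) → AntitoneOn y₂ (Icc 0 T) →
        1 / 2 * (∫ x in (-T)..T, ((y₂ x) ^ 2 - (y₁ x) ^ 2)) ≤
          c * ((∫ x in (-T)..T, (y₁ x) ^ ((3 : ℝ) / 2) * Real.sqrt (1 + (deriv y₁ x) ^ 2)) +
               (∫ x in (-T)..T, (y₂ x) ^ ((3 : ℝ) / 2) * Real.sqrt (1 + (deriv y₂ x) ^ 2)))
            ^ ((6 : ℝ) / 5) := by
  refine ⟨32, by norm_num, fun T ⟨hT, _⟩ y₁ y₂ hy₁ hy₂ hmem _ hend heven hmono hanti => ?_⟩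
  have hTT : -T < T := by linarith
  have hrange₁ (x) (hx : x ∈ Icc (-T) T) : y₁ x ∈ Icc (y₁ 0) (y₂ T) :=
    hend ▸ hmono.apply_mem_Icc_of_even (fun x hx => (heven x hx).1) hx
  have hrange₂ (x) (hx : x ∈ Icc (-T) T) : y₂ x ∈ Icc (y₂ T) (y₂ 0) :=
    hanti.apply_mem_Icc_of_even (fun x hx => (heven x hx).2) hx
  have hpos₁ (x) (hx : x ∈ Icc (-T) T) : 0 ≤ y₁ x := (hmem x hx).1.1.le
  have hpos₂ (x) (hx : x ∈ Icc (-T) T) : 0 ≤ y₂ x := (hmem x hx).2.1.1.le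
  have h0 : (0 : ℝ) ∈ Icc (-T) T := ⟨by linarith, hT.le⟩
  have hlen := mul_rpow_le_weightedGraphLength (p := 3 / 2) (by norm_num) hTT hy₂
    (hpos₂ T (right_mem_Icc.2 hTT.le)) fun x hx => (hrange₂ x hx).1
  have htop := abs_le.1
    (abs_rpow_sub_le_weightedGraphLength_of_symmetric (p := 3 / 2) (by norm_num) hT hy₂ hpos₂)
  have hbot := abs_le.1
    (abs_rpow_sub_le_weightedGraphLength_of_symmetric (p := 3 / 2) (by norm_num) hT hy₁ hpos₁)
  rw [hend] at hbot
  norm_num at htop hbot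
  have hV₁ := integral_sq_sub_sq_le hTT.le hy₁.continuousOn hy₂.continuousOn (hpos₁ 0 h0)
    (fun x hx => (hrange₁ x hx).1) fun x hx => ⟨hpos₂ x hx, (hrange₂ x hx).2⟩
  have hV₂ := integral_sq_sub_sq_le_mul_weightedGraphLength (p := 3 / 2) (by norm_num)
    (by norm_num) hTT hy₁.continuousOn hy₂ fun x hx => ⟨hpos₂ x hx, (hrange₂ x hx).2⟩
  have := le_rpow_six_fifths_of_graph_bounds (by linarith) (hpos₁ 0 h0)
    ((hmem 0 h0).2.2) (hpos₂ T (right_mem_Icc.2 hTT.le))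
    (weightedGraphLength_nonneg (p := 3 / 2) hTT.le hpos₁)
    (weightedGraphLength_nonneg (p := 3 / 2) hTT.le hpos₂)
    hlen (by linarith) (by linarith) hV₁ hV₂
  unfold weightedGraphLength at this
  linarith
end

section
/- For K > 1, define w_K(s) = inf_{t ∈ ℝ} [ (1/2)(1 − s² − t²)² + (K − 1)s²t² ] for s ≥ 0. Then w_K(s) = (1/2)(1 − s²)² − (1/2)(1 − K s²)² if 0 ≤ s < K^{−1/2}, and w_K(s) = (1/2)(1 − s²)² if s ≥ K^{−1/2}. Moreover w_K(0) = 0, w_K(1) = 0, and w_K(s) > 0 for s ∈ (0,1). -/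
open Real Set

/-- Explicit computation of the relaxed double-well potential
`w_K(s) = inf_t W_K(s,t)` for the two-component Gross-Pitaevskii potential
`W_K(s,t) = (1/2)(1−s²−t²)² + (K−1)s²t²`, together with `w_K(0) = w_K(1) = 0` and
`w_K > 0` on `(0,1)`. -/
theorem relaxed_potential_formula
    (K : ℝ) (hK : 1 < K)
    (W : ℝ → ℝ → ℝ)
    (hW : ∀ s t : ℝ, W s t = 1 / 2 * (1 - s ^ 2 - t ^ 2) ^ 2 + (K - 1) * s ^ 2 * t ^ 2)
    (w : ℝ → ℝ)
    (hw : ∀ s : ℝ, w s = if s < (Real.sqrt K)⁻¹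
      then 1 / 2 * (1 - s ^ 2) ^ 2 - 1 / 2 * (1 - K * s ^ 2) ^ 2
      else 1 / 2 * (1 - s ^ 2) ^ 2) :
    (∀ s : ℝ, 0 ≤ s → sInf (Set.range fun t => W s t) = w s) ∧
    w 0 = 0 ∧ w 1 = 0 ∧ (∀ s ∈ Ioo (0 : ℝ) 1, 0 < w s) := by
  have hK0 : (0:ℝ) < K := by linarith
  have hsK : Real.sqrt K * Real.sqrt K = K := Real.mul_self_sqrt hK0.le
  have hsKpos : 0 < Real.sqrt K := Real.sqrt_pos.mpr hK0
  have hsK1 : 1 < Real.sqrt K := by nlinarith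
  refine ⟨?_, ?_, ?_, ?_⟩
  · intro s hs
    have key : ∀ t, W s t = 1/2 * (t^2 - (1 - K*s^2))^2 +
        (1/2*(1-s^2)^2 - 1/2*(1-K*s^2)^2) := by
      intro t; rw [hW]; ring
    rw [hw]
    by_cases hc : s < (Real.sqrt K)⁻¹
    · have hmul : s * Real.sqrt K < 1 := by
        have := mul_lt_mul_of_pos_right hc hsKpos
        rwa [inv_mul_cancel₀ hsKpos.ne'] at this
      have heq : K * s^2 = (s * Real.sqrt K)^2 := by rw [mul_pow, Real.sq_sqrt hK0.le]; ring
      have hKs : K * s^2 < 1 := by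
        rw [heq]; nlinarith [mul_nonneg hs hsKpos.le]
      simp only [if_pos hc]
      apply le_antisymm
      · apply csInf_le
        · refine ⟨1/2*(1-s^2)^2 - 1/2*(1-K*s^2)^2, ?_⟩
          rintro x ⟨t, rfl⟩
          show _ ≤ W s t
          rw [key]; nlinarith [sq_nonneg (t^2 - (1-K*s^2))]
        · refine ⟨Real.sqrt (1 - K*s^2), ?_⟩
          show W s _ = _
          rw [key, Real.sq_sqrt (by linarith)]; ring
      · refine le_csInf ⟨W s 0, ⟨0, rfl⟩⟩ ?_
        rintro x ⟨t, rfl⟩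
        show _ ≤ W s t
        rw [key]; nlinarith [sq_nonneg (t^2 - (1-K*s^2))]
    · push_neg at hc
      have hmul : 1 ≤ s * Real.sqrt K := by
        have := mul_le_mul_of_nonneg_right hc hsKpos.le
        rwa [inv_mul_cancel₀ hsKpos.ne'] at this
      have heq : K * s^2 = (s * Real.sqrt K)^2 := by rw [mul_pow, Real.sq_sqrt hK0.le]; ring
      have hKs : 1 ≤ K * s^2 := by
        rw [heq]; nlinarith [mul_nonneg hs hsKpos.le]
      simp only [if_neg (not_lt.mpr hc)]
      apply le_antisymm
      · apply csInf_le
        · refine ⟨1/2*(1-s^2)^2, ?_⟩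
          rintro x ⟨t, rfl⟩
          show _ ≤ W s t
          rw [key]
          nlinarith [sq_nonneg t, sq_nonneg (t^2), mul_nonneg (sq_nonneg t) (sub_nonneg.mpr hKs)]
        · refine ⟨0, ?_⟩
          show W s 0 = _
          rw [hW]; ring
      · refine le_csInf ⟨W s 0, ⟨0, rfl⟩⟩ ?_
        rintro x ⟨t, rfl⟩
        show _ ≤ W s t
        rw [key]
        nlinarith [sq_nonneg t, sq_nonneg (t^2), mul_nonneg (sq_nonneg t) (sub_nonneg.mpr hKs)]
  · rw [hw]
    rw [if_pos (by positivity)]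
    ring
  · rw [hw]
    rw [if_neg (by
      push_neg
      rw [inv_le_one_iff₀]
      right; exact hsK1.le)]
    ring
  · intro s hsIoo
    obtain ⟨hs0, hs1⟩ := hsIoo
    rw [hw]
    have hs2 : s^2 < 1 := by nlinarith
    by_cases hc : s < (Real.sqrt K)⁻¹
    · have hmul : s * Real.sqrt K < 1 := by
        have := mul_lt_mul_of_pos_right hc hsKpos
        rwa [inv_mul_cancel₀ hsKpos.ne'] at this
      have heq : K * s^2 = (s * Real.sqrt K)^2 := by rw [mul_pow, Real.sq_sqrt hK0.le]; ring
      have hKs : K * s^2 < 1 := by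
        rw [heq]; nlinarith [mul_nonneg hs0.le hsKpos.le]
      rw [if_pos hc]
      have h1 : 0 < 2 - (K+1)*s^2 := by nlinarith
      have h2 : 0 < (K-1) * s^2 := by nlinarith [mul_pos hs0 hs0]
      nlinarith [mul_pos h2 h1]
    · rw [if_neg hc]
      have h : 0 < 1 - s^2 := by linarith
      nlinarith [mul_pos h h]
end
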